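/- arXiv:2207.10249 — 11 statements merged into one kernel-verified Lean document; each statement's English description precedes it below -/
import Mathlib

section
/- Let n be a positive integer, let a be a unit of ℤ/nℤ and let b ∈ ℤ/nℤ. On X = ℤ/nℤ define x*y = a·x + (1−a)·y (so x*̄y = a⁻¹·x + (1−a⁻¹)·y), R₁(x,y) = b·x + (1−b)·y and R₂(x,y) = a(1−b)·x + (1 − a(1−b))·y. Then (X, *, R₁, R₂) is an oriented singquandle, i.e. for all x, y, z ∈ X: (1) R₁(x*̄y, z)*y = R₁(x, z*y); (2) R₂(x*̄y, z) = R₂(x, z*y)*̄y; (3) (y*̄R₁(x,z))*x = (y*R₂(x,z))*̄z; (4) R₂(x,y) = R₁(y, x*y); (5) R₁(x,y)*R₂(x,y) = R₂(y, x*y). -/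
/-- The affine operations on `ℤ/nℤ` with `R₁(x,y) = b·x + (1-b)·y` and
`R₂(x,y) = a(1-b)·x + (1 - a(1-b))·y` form an oriented singquandle. -/
theorem affine_is_singquandle (n : ℕ) (hn : 0 < n) (a : (ZMod n)ˣ) (b : ZMod n)
    (op opbar R₁ R₂ : ZMod n → ZMod n → ZMod n)
    (hop : ∀ x y, op x y = (a : ZMod n) * x + (1 - (a : ZMod n)) * y)
    (hopbar : ∀ x y, opbar x y =
      ((a⁻¹ : (ZMod n)ˣ) : ZMod n) * x + (1 - ((a⁻¹ : (ZMod n)ˣ) : ZMod n)) * y)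
    (hR₁ : ∀ x y, R₁ x y = b * x + (1 - b) * y)
    (hR₂ : ∀ x y, R₂ x y = (a : ZMod n) * (1 - b) * x + (1 - (a : ZMod n) * (1 - b)) * y) :
    (∀ x y z, op (R₁ (opbar x y) z) y = R₁ x (op z y)) ∧
    (∀ x y z, R₂ (opbar x y) z = opbar (R₂ x (op z y)) y) ∧
    (∀ x y z, op (opbar y (R₁ x z)) x = opbar (op y (R₂ x z)) z) ∧
    (∀ x y, R₂ x y = R₁ y (op x y)) ∧
    (∀ x y, op (R₁ x y) (R₂ x y) = R₂ y (op x y)) := by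
  have ha : ((a⁻¹ : (ZMod n)ˣ) : ZMod n) * (a : ZMod n) = 1 := by
    rw [← Units.val_mul, inv_mul_cancel, Units.val_one]
  refine ⟨fun x y z => ?_, fun x y z => ?_, fun x y z => ?_, fun x y => ?_, fun x y => ?_⟩ <;>
    simp only [hop, hopbar, hR₁, hR₂]
  · linear_combination (b * x - b * y) * ha
  · linear_combination (y - z + (a : ZMod n) * z - (a : ZMod n) * y - (a : ZMod n) * b * z
      + (a : ZMod n) * b * y) * ha
  · linear_combination (z - x - (a : ZMod n) * z + (a : ZMod n) * x + (a : ZMod n) * b * z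
      - (a : ZMod n) * b * x) * ha
  · ring
  · ring
end

section
/- Let G be a group with conjugation quandle operation x*y = y⁻¹xy (so x*̄y = yxy⁻¹). Define R₁(x,y) = xyxy⁻¹x⁻¹ and R₂(x,y) = xyx⁻¹. Then (G, *, R₁, R₂) is an oriented singquandle, i.e. for all x, y, z ∈ G: (1) R₁(x*̄y, z)*y = R₁(x, z*y); (2) R₂(x*̄y, z) = R₂(x, z*y)*̄y; (3) (y*̄R₁(x,z))*x = (y*R₂(x,z))*̄z; (4) R₂(x,y) = R₁(y, x*y); (5) R₁(x,y)*R₂(x,y) = R₂(y, x*y). -/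
/-- The conjugation quandle on a group `G` together with the maps
`R₁` and `R₂` given below is an oriented singquandle. -/
theorem conj_singquandle_3 {G : Type*} [Group G]
    (op opbar R₁ R₂ : G → G → G)
    (hop : ∀ x y : G, op x y = y⁻¹ * x * y)
    (hopbar : ∀ x y : G, opbar x y = y * x * y⁻¹)
    (hR₁ : ∀ x y : G, R₁ x y = x * y * x * y⁻¹ * x⁻¹)
    (hR₂ : ∀ x y : G, R₂ x y = x * y * x⁻¹) :
    (∀ x y z, op (R₁ (opbar x y) z) y = R₁ x (op z y)) ∧
    (∀ x y z, R₂ (opbar x y) z = opbar (R₂ x (op z y)) y) ∧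
    (∀ x y z, op (opbar y (R₁ x z)) x = opbar (op y (R₂ x z)) z) ∧
    (∀ x y, R₂ x y = R₁ y (op x y)) ∧
    (∀ x y, op (R₁ x y) (R₂ x y) = R₂ y (op x y)) := by
  refine ⟨fun x y z => ?_, fun x y z => ?_, fun x y z => ?_, fun x y => ?_, fun x y => ?_⟩ <;>
    simp only [hop, hopbar, hR₁, hR₂, mul_inv_rev, inv_inv] <;> group
end

section
/- Let G be a group with conjugation quandle operation x*y = y⁻¹xy (so x*̄y = yxy⁻¹). Define R₁(x,y) = y⁻¹xy and R₂(x,y) = y⁻¹x⁻¹yxy. Then (G, *, R₁, R₂) is an oriented singquandle, i.e. for all x, y, z ∈ G: (1) R₁(x*̄y, z)*y = R₁(x, z*y); (2) R₂(x*̄y, z) = R₂(x, z*y)*̄y; (3) (y*̄R₁(x,z))*x = (y*R₂(x,z))*̄z; (4) R₂(x,y) = R₁(y, x*y); (5) R₁(x,y)*R₂(x,y) = R₂(y, x*y). -/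
/-- The conjugation quandle on a group `G` together with the maps
`R₁` and `R₂` given below is an oriented singquandle. -/
theorem conj_singquandle_4 {G : Type*} [Group G]
    (op opbar R₁ R₂ : G → G → G)
    (hop : ∀ x y : G, op x y = y⁻¹ * x * y)
    (hopbar : ∀ x y : G, opbar x y = y * x * y⁻¹)
    (hR₁ : ∀ x y : G, R₁ x y = y⁻¹ * x * y)
    (hR₂ : ∀ x y : G, R₂ x y = y⁻¹ * x⁻¹ * y * x * y) :
    (∀ x y z, op (R₁ (opbar x y) z) y = R₁ x (op z y)) ∧
    (∀ x y z, R₂ (opbar x y) z = opbar (R₂ x (op z y)) y) ∧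
    (∀ x y z, op (opbar y (R₁ x z)) x = opbar (op y (R₂ x z)) z) ∧
    (∀ x y, R₂ x y = R₁ y (op x y)) ∧
    (∀ x y, op (R₁ x y) (R₂ x y) = R₂ y (op x y)) := by
  simp only [hop, hopbar, hR₁, hR₂]
  refine ⟨fun x y z => ?_, fun x y z => ?_, fun x y z => ?_, fun x y => ?_, fun x y => ?_⟩ <;>
    group
end

section
/- Let G be a group with conjugation quandle operation x*y = y⁻¹xy (so x*̄y = yxy⁻¹). Define R₁(x,y) = xy⁻¹x⁻¹yx and R₂(x,y) = x⁻¹y⁻¹xy². Then (G, *, R₁, R₂) is an oriented singquandle, i.e. for all x, y, z ∈ G: (1) R₁(x*̄y, z)*y = R₁(x, z*y); (2) R₂(x*̄y, z) = R₂(x, z*y)*̄y; (3) (y*̄R₁(x,z))*x = (y*R₂(x,z))*̄z; (4) R₂(x,y) = R₁(y, x*y); (5) R₁(x,y)*R₂(x,y) = R₂(y, x*y). -/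
/-- The conjugation quandle on a group `G` together with the maps
`R₁` and `R₂` given below is an oriented singquandle. -/
theorem conj_singquandle_5 {G : Type*} [Group G]
    (op opbar R₁ R₂ : G → G → G)
    (hop : ∀ x y : G, op x y = y⁻¹ * x * y)
    (hopbar : ∀ x y : G, opbar x y = y * x * y⁻¹)
    (hR₁ : ∀ x y : G, R₁ x y = x * y⁻¹ * x⁻¹ * y * x)
    (hR₂ : ∀ x y : G, R₂ x y = x⁻¹ * y⁻¹ * x * y ^ 2) :
    (∀ x y z, op (R₁ (opbar x y) z) y = R₁ x (op z y)) ∧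
    (∀ x y z, R₂ (opbar x y) z = opbar (R₂ x (op z y)) y) ∧
    (∀ x y z, op (opbar y (R₁ x z)) x = opbar (op y (R₂ x z)) z) ∧
    (∀ x y, R₂ x y = R₁ y (op x y)) ∧
    (∀ x y, op (R₁ x y) (R₂ x y) = R₂ y (op x y)) := by
  simp only [hop, hopbar, hR₁, hR₂, sq]
  refine ⟨fun x y z => ?_, fun x y z => ?_, fun x y z => ?_, fun x y => ?_, fun x y => ?_⟩ <;>
    group
end

section
/- Let G be a group with conjugation quandle operation x*y = y⁻¹xy (so x*̄y = yxy⁻¹), and let n ≥ 1 be an integer. Define R₁(x,y) = y(x⁻¹y)ⁿ and R₂(x,y) = (y⁻¹x)ⁿ⁺¹y. Then (G, *, R₁, R₂) is an oriented singquandle, i.e. for all x, y, z ∈ G: (1) R₁(x*̄y, z)*y = R₁(x, z*y); (2) R₂(x*̄y, z) = R₂(x, z*y)*̄y; (3) (y*̄R₁(x,z))*x = (y*R₂(x,z))*̄z; (4) R₂(x,y) = R₁(y, x*y); (5) R₁(x,y)*R₂(x,y) = R₂(y, x*y). -/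
private lemma sq_cpow {G : Type*} [Group G] (n : ℕ) (a b : G) :
    (a⁻¹ * b * a) ^ n = a⁻¹ * b ^ n * a := by
  induction n with
  | zero => simp
  | succ k ih => rw [pow_succ, pow_succ, ih]; group

/-- The conjugation quandle on a group `G` together with the maps
`R₁` and `R₂` given below is an oriented singquandle. -/
theorem conj_singquandle_6 {G : Type*} [Group G] (n : ℕ) (hn : 1 ≤ n)
    (op opbar R₁ R₂ : G → G → G)
    (hop : ∀ x y : G, op x y = y⁻¹ * x * y)
    (hopbar : ∀ x y : G, opbar x y = y * x * y⁻¹)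
    (hR₁ : ∀ x y : G, R₁ x y = y * (x⁻¹ * y) ^ n)
    (hR₂ : ∀ x y : G, R₂ x y = (y⁻¹ * x) ^ (n + 1) * y) :
    (∀ x y z, op (R₁ (opbar x y) z) y = R₁ x (op z y)) ∧
    (∀ x y z, R₂ (opbar x y) z = opbar (R₂ x (op z y)) y) ∧
    (∀ x y z, op (opbar y (R₁ x z)) x = opbar (op y (R₂ x z)) z) ∧
    (∀ x y, R₂ x y = R₁ y (op x y)) ∧
    (∀ x y, op (R₁ x y) (R₂ x y) = R₂ y (op x y)) := by
  refine ⟨fun x y z => ?_, fun x y z => ?_, fun x y z => ?_, fun x y => ?_, fun x y => ?_⟩ <;>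
      simp only [hop, hopbar, hR₁, hR₂, mul_inv_rev, inv_inv]
  · rw [show y * (x⁻¹ * y⁻¹) * z = y * (x⁻¹ * (y⁻¹ * z * y)) * y⁻¹ from by group, conj_pow]
    group
  · rw [show y⁻¹ * (z⁻¹ * y) * x = y⁻¹ * (z⁻¹ * (y * x * y⁻¹)) * y from by group, sq_cpow]
    group
  · have h3 : ((x⁻¹ * z) ^ n)⁻¹ * z⁻¹ = ((x⁻¹ * z) ^ (n + 1))⁻¹ * x⁻¹ := by
      rw [pow_succ', mul_inv_rev]; group
    rw [h3, show z⁻¹ * x = ((x⁻¹ * z))⁻¹ from by group, inv_pow]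
    group
  · rw [show y⁻¹ * (y⁻¹ * x * y) = y⁻¹ * (y⁻¹ * x) * y from by group, sq_cpow, pow_succ']
    group
  · rw [show y⁻¹ * (x⁻¹ * y) * y = y⁻¹ * (x⁻¹ * y) * y from rfl, sq_cpow,
      show y⁻¹ * x = (x⁻¹ * y)⁻¹ from by group, inv_pow, pow_succ']
    group
end

section
/- Let n be a positive integer, let a be a unit of ℤ/nℤ and let b, e ∈ ℤ/nℤ. On X = ℤ/nℤ define x*y = a·x + (1−a)·y (so x*̄y = a⁻¹·x + (1−a⁻¹)·y), R₁(x,y) = b·x + (1−b)·y, R₂(x,y) = a(1−b)·x + (1 − a(1−b))·y, R₃(x,y) = (1−e)·x + e·y, and R₄(x,y) = (1 − a(1−e))·x + a(1−e)·y. Then (X, *, R₁, R₂, R₃, R₄) is an oriented stuquandle: (X, *, R₁, R₂) is an oriented singquandle and, for all x, y, z ∈ X: (6) R₃(y,x)*R₄(y,x) = R₄(x*y, y); (7) R₄(y,x) = R₃(x*y, y); (8) R₃(y*x, z) = R₃(y, z*̄x)*x; (9) R₄(y, z*̄x) = R₄(y*x, z)*̄x; (10) (x*R₄(y,z))*̄y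 = (x*̄R₃(y,z))*z. -/
/-- The affine operations on `ℤ/nℤ` with
`R₁(x,y) = b·x + (1-b)·y`, `R₂(x,y) = a(1-b)·x + (1-a(1-b))·y`,
`R₃(x,y) = (1-e)·x + e·y`, `R₄(x,y) = (1-a(1-e))·x + a(1-e)·y`
form an oriented stuquandle. -/
theorem affine_is_stuquandle (n : ℕ) (hn : 0 < n) (a : (ZMod n)ˣ) (b e : ZMod n)
    (op opbar R₁ R₂ R₃ R₄ : ZMod n → ZMod n → ZMod n)
    (hop : ∀ x y, op x y = (a : ZMod n) * x + (1 - (a : ZMod n)) * y)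
    (hopbar : ∀ x y, opbar x y =
      ((a⁻¹ : (ZMod n)ˣ) : ZMod n) * x + (1 - ((a⁻¹ : (ZMod n)ˣ) : ZMod n)) * y)
    (hR₁ : ∀ x y, R₁ x y = b * x + (1 - b) * y)
    (hR₂ : ∀ x y, R₂ x y = (a : ZMod n) * (1 - b) * x + (1 - (a : ZMod n) * (1 - b)) * y)
    (hR₃ : ∀ x y, R₃ x y = (1 - e) * x + e * y)
    (hR₄ : ∀ x y, R₄ x y = (1 - (a : ZMod n) * (1 - e)) * x + (a : ZMod n) * (1 - e) * y) :
    -- oriented singquandle axioms (1)–(5)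
    ((∀ x y z, op (R₁ (opbar x y) z) y = R₁ x (op z y)) ∧
     (∀ x y z, R₂ (opbar x y) z = opbar (R₂ x (op z y)) y) ∧
     (∀ x y z, op (opbar y (R₁ x z)) x = opbar (op y (R₂ x z)) z) ∧
     (∀ x y, R₂ x y = R₁ y (op x y)) ∧
     (∀ x y, op (R₁ x y) (R₂ x y) = R₂ y (op x y))) ∧
    -- stuquandle axioms (6)–(10)
    ((∀ x y, op (R₃ y x) (R₄ y x) = R₄ (op x y) y) ∧
     (∀ x y, R₄ y x = R₃ (op x y) y) ∧
     (∀ x y z, R₃ (op y x) z = op (R₃ y (opbar z x)) x) ∧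
     (∀ x y z, R₄ y (opbar z x) = opbar (R₄ (op y x) z) x) ∧
     (∀ x y z, opbar (op x (R₄ y z)) y = op (opbar x (R₃ y z)) z)) := by
  set c : ZMod n := ((a⁻¹ : (ZMod n)ˣ) : ZMod n) with hc0
  have hc : (a : ZMod n) * c - 1 = 0 := by
    rw [hc0, ← Units.val_mul, mul_inv_cancel, Units.val_one, sub_self]
  refine ⟨⟨?_, ?_, ?_, ?_, ?_⟩, ?_, ?_, ?_, ?_, ?_⟩ <;> intros x y <;>
    first
    | (intro z
       simp only [hop, hopbar, hR₁, hR₂, hR₃, hR₄, ← hc0]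
       first
       | linear_combination (b * x - b * y) * hc
       | linear_combination (y - z + a * z - a * y - a * b * z + a * b * y) * hc
       | linear_combination (z - x + a * x - a * b * x - a * z + a * b * z) * hc
       | linear_combination (e * x - e * z) * hc
       | linear_combination (x - y + a * y - a * x - a * e * y + a * e * x) * hc
       | linear_combination (z - y + a * y - a * e * y - a * z + a * e * z) * hc
       | ring)
    | (simp only [hop, hopbar, hR₁, hR₂, hR₃, hR₄, ← hc0]; ring)
end

section
/- Let n be a positive integer, let a be a unit of ℤ/nℤ and let d, e ∈ ℤ/nℤ be arbitrary. On X = ℤ/nℤ define x*y = a·x + (1−a)·y, R₃(x,y) = d·x + e·y and R₄(x,y) = (d(1−a) + e)·x + a·d·y. Then stuquandle axiom (6) holds for all x, y ∈ X: R₃(y,x)*R₄(y,x) = R₄(x*y, y). (In particular, axiom (6) imposes no constraint on the coefficients d and e.) -/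
/-- For arbitrary `d, e` in `ℤ/nℤ`, with `R₃(x,y) = d·x + e·y` and
`R₄(x,y) = (d(1-a)+e)·x + a·d·y`, stuquandle axiom (6) holds:
`R₃(y,x)*R₄(y,x) = R₄(x*y, y)` for all `x, y`. -/
theorem affine_stuquandle_axiom6 (n : ℕ) (hn : 0 < n) (a : (ZMod n)ˣ) (d e : ZMod n)
    (op R₃ R₄ : ZMod n → ZMod n → ZMod n)
    (hop : ∀ x y, op x y = (a : ZMod n) * x + (1 - (a : ZMod n)) * y)
    (hR₃ : ∀ x y, R₃ x y = d * x + e * y)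
    (hR₄ : ∀ x y, R₄ x y = (d * (1 - (a : ZMod n)) + e) * x + (a : ZMod n) * d * y) :
    ∀ x y, op (R₃ y x) (R₄ y x) = R₄ (op x y) y := by
  intro x y
  simp only [hop, hR₃, hR₄]
  ring
end

section
/- Let n be a positive integer, let a be a unit of ℤ/nℤ and let e ∈ ℤ/nℤ. On X = ℤ/nℤ define x*y = a·x + (1−a)·y, x*̄y = a⁻¹·x + (1−a⁻¹)·y and R₃(x,y) = (1−e)·x + e·y. Then stuquandle axiom (8) holds for all x, y, z ∈ X: R₃(y*x, z) = R₃(y, z*̄x)*x. -/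
/-- With `R₃(x,y) = (1-e)·x + e·y` on `ℤ/nℤ`, stuquandle axiom (8) holds:
`R₃(y*x, z) = R₃(y, z*̄x)*x` for all `x, y, z`. -/
theorem affine_stuquandle_axiom8 (n : ℕ) (hn : 0 < n) (a : (ZMod n)ˣ) (e : ZMod n)
    (op opbar R₃ : ZMod n → ZMod n → ZMod n)
    (hop : ∀ x y, op x y = (a : ZMod n) * x + (1 - (a : ZMod n)) * y)
    (hopbar : ∀ x y, opbar x y =
      ((a⁻¹ : (ZMod n)ˣ) : ZMod n) * x + (1 - ((a⁻¹ : (ZMod n)ˣ) : ZMod n)) * y)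
    (hR₃ : ∀ x y, R₃ x y = (1 - e) * x + e * y) :
    ∀ x y z, R₃ (op y x) z = op (R₃ y (opbar z x)) x := by
  intro x y z
  have ha : (a : ZMod n) * ((a⁻¹ : (ZMod n)ˣ) : ZMod n) = 1 := by
    rw [← Units.val_mul, mul_inv_cancel, Units.val_one]
  simp only [hR₃, hop, hopbar]
  ring_nf
  linear_combination (e * x - e * z) * ha
end

section
/- Let n be a positive integer, let a be a unit of ℤ/nℤ and let e ∈ ℤ/nℤ. On X = ℤ/nℤ define x*y = a·x + (1−a)·y, x*̄y = a⁻¹·x + (1−a⁻¹)·y and R₄(x,y) = (1 − a(1−e))·x + a(1−e)·y. Then stuquandle axiom (9) holds for all x, y, z ∈ X: R₄(y, z*̄x) = R₄(y*x, z)*̄x. -/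
/-- With `R₄(x,y) = (1-a(1-e))·x + a(1-e)·y` on `ℤ/nℤ`, stuquandle
axiom (9) holds: `R₄(y, z*̄x) = R₄(y*x, z)*̄x` for all `x, y, z`. -/
theorem affine_stuquandle_axiom9 (n : ℕ) (hn : 0 < n) (a : (ZMod n)ˣ) (e : ZMod n)
    (op opbar R₄ : ZMod n → ZMod n → ZMod n)
    (hop : ∀ x y, op x y = (a : ZMod n) * x + (1 - (a : ZMod n)) * y)
    (hopbar : ∀ x y, opbar x y =
      ((a⁻¹ : (ZMod n)ˣ) : ZMod n) * x + (1 - ((a⁻¹ : (ZMod n)ˣ) : ZMod n)) * y)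
    (hR₄ : ∀ x y, R₄ x y = (1 - (a : ZMod n) * (1 - e)) * x + (a : ZMod n) * (1 - e) * y) :
    ∀ x y z, R₄ y (opbar z x) = opbar (R₄ (op y x) z) x := by
  intro x y z
  have hinv : ((a⁻¹ : (ZMod n)ˣ) : ZMod n) * (a : ZMod n) = 1 := by
    rw [← Units.val_mul, inv_mul_cancel, Units.val_one]
  simp only [hop, hopbar, hR₄]
  linear_combination (-((1 - (a:ZMod n)*(1-e))*y + ((a:ZMod n)*(1-e)-1)*x)) * hinv
end

section
/- Let n be a positive integer, let a be a unit of ℤ/nℤ and let e ∈ ℤ/nℤ. On X = ℤ/nℤ define x*y = a·x + (1−a)·y, x*̄y = a⁻¹·x + (1−a⁻¹)·y, R₃(x,y) = (1−e)·x + e·y and R₄(x,y) = (1 − a(1−e))·x + a(1−e)·y. Then stuquandle axiom (10) holds for all x, y, z ∈ X: (x*R₄(y,z))*̄y = (x*̄R₃(y,z))*z. -/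
/-- With `R₃(x,y) = (1-e)·x + e·y` and `R₄(x,y) = (1-a(1-e))·x + a(1-e)·y`
on `ℤ/nℤ`, stuquandle axiom (10) holds: `(x*R₄(y,z))*̄y = (x*̄R₃(y,z))*z` for all `x, y, z`. -/
theorem affine_stuquandle_axiom10 (n : ℕ) (hn : 0 < n) (a : (ZMod n)ˣ) (e : ZMod n)
    (op opbar R₃ R₄ : ZMod n → ZMod n → ZMod n)
    (hop : ∀ x y, op x y = (a : ZMod n) * x + (1 - (a : ZMod n)) * y)
    (hopbar : ∀ x y, opbar x y =
      ((a⁻¹ : (ZMod n)ˣ) : ZMod n) * x + (1 - ((a⁻¹ : (ZMod n)ˣ) : ZMod n)) * y)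
    (hR₃ : ∀ x y, R₃ x y = (1 - e) * x + e * y)
    (hR₄ : ∀ x y, R₄ x y = (1 - (a : ZMod n) * (1 - e)) * x + (a : ZMod n) * (1 - e) * y) :
    ∀ x y z, opbar (op x (R₄ y z)) y = op (opbar x (R₃ y z)) z := by
  intro x y z
  simp only [hop, hopbar, hR₃, hR₄]
  have h : ((a⁻¹ : (ZMod n)ˣ) : ZMod n) * (a : ZMod n) = 1 := by
    rw [← Units.val_mul, inv_mul_cancel, Units.val_one]
  set b := ((a⁻¹ : (ZMod n)ˣ) : ZMod n)
  ring_nf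
  linear_combination ((z - y) + (a : ZMod n)*(-e*y + e*z + y - z)) * h
end

section
/- Let R be a commutative ring, let t be a unit of R, and let β, ε ∈ R (in the paper, β = at + bv + ctv and ε = dt + fv + etv for a Laurent-polynomial ring R = ℤ[t^{±1}, v]). Let X be an R-module. Define on X: x*y = t·x + (1−t)·y (so x*̄y = t⁻¹·x + (1−t⁻¹)·y), R₁(x,y) = β·x + (1−β)·y, R₂(x,y) = t(1−β)·x + (1 − t(1−β))·y, R₃(x,y) = (1−ε)·x + ε·y, and R₄(x,y) = (1 − t(1−ε))·x + t(1−ε)·y. Then (X, *, R₁, R₂, R₃, R₄) is an oriented stuquandle (the Alexander oriented stuquandle): (X,*) is a quandle, axioms (1)–(5) of an oriented singquandle hold for (R₁, R₂), and axioms (6)–(10) hold for (R₃, R₄). -/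
/-- Let `R` be a commutative ring, `t` a unit of `R`, and `β, ε ∈ R`.
On an `R`-module `X`, the operations `x*y = t•x + (1-t)•y`, `x*̄y = t⁻¹•x + (1-t⁻¹)•y`,
`R₁(x,y) = β•x + (1-β)•y`, `R₂(x,y) = t(1-β)•x + (1-t(1-β))•y`,
`R₃(x,y) = (1-ε)•x + ε•y`, `R₄(x,y) = (1-t(1-ε))•x + t(1-ε)•y`
form an oriented stuquandle (the Alexander oriented stuquandle): `(X,*)` is a quandle
and axioms (1)–(5) and (6)–(10) hold. -/
theorem alexander_stuquandle {R : Type*} [CommRing R] (t : Rˣ) (β ε : R)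
    {X : Type*} [AddCommGroup X] [Module R X]
    (op opbar R₁ R₂ R₃ R₄ : X → X → X)
    (hop : ∀ x y, op x y = (t : R) • x + (1 - (t : R)) • y)
    (hopbar : ∀ x y, opbar x y =
      ((t⁻¹ : Rˣ) : R) • x + (1 - ((t⁻¹ : Rˣ) : R)) • y)
    (hR₁ : ∀ x y, R₁ x y = β • x + (1 - β) • y)
    (hR₂ : ∀ x y, R₂ x y = ((t : R) * (1 - β)) • x + (1 - (t : R) * (1 - β)) • y)
    (hR₃ : ∀ x y, R₃ x y = (1 - ε) • x + ε • y)
    (hR₄ : ∀ x y, R₄ x y = (1 - (t : R) * (1 - ε)) • x + ((t : R) * (1 - ε)) • y) :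
    -- (X, *) is a quandle
    ((∀ x, op x x = x) ∧
     (∀ y z : X, ∃! x, op x y = z) ∧
     (∀ x y, opbar (op x y) y = x ∧ op (opbar x y) y = x) ∧
     (∀ x y z, op (op x y) z = op (op x z) (op y z))) ∧
    -- oriented singquandle axioms (1)–(5)
    ((∀ x y z, op (R₁ (opbar x y) z) y = R₁ x (op z y)) ∧
     (∀ x y z, R₂ (opbar x y) z = opbar (R₂ x (op z y)) y) ∧
     (∀ x y z, op (opbar y (R₁ x z)) x = opbar (op y (R₂ x z)) z) ∧
     (∀ x y, R₂ x y = R₁ y (op x y)) ∧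
     (∀ x y, op (R₁ x y) (R₂ x y) = R₂ y (op x y))) ∧
    -- stuquandle axioms (6)–(10)
    ((∀ x y, op (R₃ y x) (R₄ y x) = R₄ (op x y) y) ∧
     (∀ x y, R₄ y x = R₃ (op x y) y) ∧
     (∀ x y z, R₃ (op y x) z = op (R₃ y (opbar z x)) x) ∧
     (∀ x y z, R₄ y (opbar z x) = opbar (R₄ (op y x) z) x) ∧
     (∀ x y z, opbar (op x (R₄ y z)) y = op (opbar x (R₃ y z)) z)) := by
  obtain ⟨s, hs⟩ : ∃ s : R, ((t⁻¹ : Rˣ) : R) = s := ⟨_, rfl⟩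
  have hst : s * (t : R) = 1 := by rw [← hs]; exact_mod_cast t.inv_mul
  have key : ∀ x y : X, opbar (op x y) y = x := by
    intro x y
    simp only [hop, hopbar, hs]
    match_scalars <;>
      (first
        | linear_combination (norm := ring1) hst
        | linear_combination (norm := ring1) (-1 : R) * hst)
  have key2 : ∀ x y : X, op (opbar x y) y = x := by
    intro x y
    simp only [hop, hopbar, hs]
    match_scalars <;>
      (first
        | linear_combination (norm := ring1) hst
        | linear_combination (norm := ring1) (-1 : R) * hst)
  have huniq : ∀ y z : X, ∃! x, op x y = z := fun y z =>
    ⟨opbar z y, key2 z y, fun x hx => by rw [← hx]; exact (key x y).symm⟩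
  refine ⟨⟨?_, huniq, fun x y => ⟨key x y, key2 x y⟩, ?_⟩, ⟨?_, ?_, ?_, ?_, ?_⟩,
    ⟨?_, ?_, ?_, ?_, ?_⟩⟩
  all_goals (
    intros
    simp only [hop, hopbar, hR₁, hR₂, hR₃, hR₄, hs]
    match_scalars <;>
      (first
        | linear_combination (norm := ring1) (0:R) * hst
        | linear_combination (norm := ring1) hst
        | linear_combination (norm := ring1) (-1 : R) * hst
        | linear_combination (norm := ring1) β * hst
        | linear_combination (norm := ring1) (-β) * hst
        | linear_combination (norm := ring1) (1 - (t:R) + (t:R)*β) * hst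
        | linear_combination (norm := ring1) (-(1 - (t:R) + (t:R)*β)) * hst
        | linear_combination (norm := ring1) ε * hst
        | linear_combination (norm := ring1) (-ε) * hst
        | linear_combination (norm := ring1) (1 - (t:R) + (t:R)*ε) * hst
        | linear_combination (norm := ring1) (-(1 - (t:R) + (t:R)*ε)) * hst))
end
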